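/- Let ρ, σ, and τ be density operators on ℂⁿ, and define D(ρ,σ) = √(1 − tr(ρσ)). Then the triangle inequality holds: D(ρ,σ) ≤ D(ρ,τ) + D(τ,σ). -/

import Mathlib

/-!
Under vectorisation `tr(ρσ)` is the Frobenius inner product, and a density matrix lies in the
unit ball since `tr(ρ²) = ∑ λᵢ² ≤ (∑ λᵢ)² = 1`. For `u, v, w` in the unit ball of any inner
product space, put `X² = 1 - re⟪u, w⟫` and `Y² = 1 - re⟪w, v⟫`. Then
`1 - re⟪u, v⟫ = X² + Y² - (1 - ‖w‖²) + re⟪u - w, w - v⟫`, while `‖u - w‖² ≤ 2X²` and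
`‖w - v‖² ≤ 2Y²`, so Cauchy–Schwarz gives `1 - re⟪u, v⟫ ≤ (X + Y)²`.
-/

open RCLike WithLp Matrix
open scoped InnerProductSpace ComplexOrder

section InnerProductSpace

variable {𝕜 E : Type*} [RCLike 𝕜] [SeminormedAddCommGroup E] [InnerProductSpace 𝕜 E]

lemma norm_sub_sq_le_two_mul_one_sub_re_inner {u v : E} (hu : ‖u‖ ≤ 1) (hv : ‖v‖ ≤ 1) :
    ‖u - v‖ ^ 2 ≤ 2 * (1 - re ⟪u, v⟫_𝕜) := by
  rw [norm_sub_sq (𝕜 := 𝕜)]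
  nlinarith [norm_nonneg u, norm_nonneg v]

theorem sqrt_one_sub_re_inner_le_add {u v w : E} (hu : ‖u‖ ≤ 1) (hv : ‖v‖ ≤ 1) (hw : ‖w‖ ≤ 1) :
    √(1 - re ⟪u, v⟫_𝕜) ≤ √(1 - re ⟪u, w⟫_𝕜) + √(1 - re ⟪w, v⟫_𝕜) := by
  set X := √(1 - re ⟪u, w⟫_𝕜)
  set Y := √(1 - re ⟪w, v⟫_𝕜)
  have huw := norm_sub_sq_le_two_mul_one_sub_re_inner (𝕜 := 𝕜) hu hw
  have hwv := norm_sub_sq_le_two_mul_one_sub_re_inner (𝕜 := 𝕜) hw hv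
  have hX : X ^ 2 = 1 - re ⟪u, w⟫_𝕜 := Real.sq_sqrt (by nlinarith [sq_nonneg ‖u - w‖])
  have hY : Y ^ 2 = 1 - re ⟪w, v⟫_𝕜 := Real.sq_sqrt (by nlinarith [sq_nonneg ‖w - v‖])
  rw [← hX] at huw
  rw [← hY] at hwv
  have hprod : ‖u - w‖ * ‖w - v‖ ≤ 2 * (X * Y) := by
    refine (pow_le_pow_iff_left₀ (by positivity) (by positivity) two_ne_zero).1 ?_
    calc (‖u - w‖ * ‖w - v‖) ^ 2 = ‖u - w‖ ^ 2 * ‖w - v‖ ^ 2 := mul_pow ..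
      _ ≤ (2 * X ^ 2) * (2 * Y ^ 2) := by gcongr
      _ = (2 * (X * Y)) ^ 2 := by ring
  have hsplit : 1 - re ⟪u, v⟫_𝕜 = X ^ 2 + Y ^ 2 - (1 - ‖w‖ ^ 2) + re ⟪u - w, w - v⟫_𝕜 := by
    rw [hX, hY, @norm_sq_eq_re_inner 𝕜]
    simp only [inner_sub_left, inner_sub_right, map_sub]
    ring
  rw [Real.sqrt_le_iff]
  refine ⟨by positivity, ?_⟩
  linarith [add_sq X Y, re_inner_le_norm (𝕜 := 𝕜) (u - w) (w - v), pow_le_one₀ (n := 2) (norm_nonneg w) hw]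

end InnerProductSpace

namespace Matrix

variable {𝕜 n : Type*} [RCLike 𝕜] [Fintype n]

lemma IsHermitian.trace_mul_eq_inner_toLp_vec {A : Matrix n n 𝕜} (hA : A.IsHermitian)
    (B : Matrix n n 𝕜) : (A * B).trace = ⟪toLp 2 (vec A), toLp 2 (vec B)⟫_𝕜 := by
  rw [EuclideanSpace.inner_eq_star_dotProduct, dotProduct_comm, ofLp_toLp, ofLp_toLp,
    star_vec_dotProduct_vec, hA.eq]

lemma PosSemidef.re_trace_mul_self_le_sq [DecidableEq n] {A : Matrix n n 𝕜} (hA : A.PosSemidef) :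
    re (A * A).trace ≤ re A.trace ^ 2 := by
  have hA2 : (A * A).trace = ∑ i, ((hA.1.eigenvalues i ^ 2 : ℝ) : 𝕜) := by
    conv_lhs => rw [hA.1.spectral_theorem, ← map_mul, Unitary.conjStarAlgAut_apply,
      trace_mul_cycle, Unitary.coe_star_mul_self, one_mul, diagonal_mul_diagonal, trace_diagonal]
    simp [sq]
  rw [hA2, hA.1.trace_eq_sum_eigenvalues]
  simp only [map_sum, RCLike.ofReal_re]
  exact Finset.sum_sq_le_sq_sum_of_nonneg fun i _ => hA.eigenvalues_nonneg i

lemma PosSemidef.norm_toLp_vec_le_one {A : Matrix n n 𝕜} (hA : A.PosSemidef)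
    (htr : A.trace = 1) : ‖toLp 2 (vec A)‖ ≤ 1 := by
  classical
  have h := hA.re_trace_mul_self_le_sq
  rw [hA.1.trace_mul_eq_inner_toLp_vec, ← @norm_sq_eq_re_inner 𝕜, htr, one_re, one_pow] at h
  exact (sq_le_one_iff₀ (norm_nonneg _)).1 h

end Matrix

/-- For density operators `ρ, σ, τ` on `ℂⁿ`, the no-name distance
`D(ρ,σ) = √(1 - tr(ρσ))` satisfies the triangle inequality
`D(ρ,σ) ≤ D(ρ,τ) + D(τ,σ)`. -/
theorem noname_distance_triangle
    (n : ℕ) (ρ σ τ : Matrix (Fin n) (Fin n) ℂ)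
    (hρ : ρ.PosSemidef) (hσ : σ.PosSemidef) (hτ : τ.PosSemidef)
    (hρtr : ρ.trace = 1) (hσtr : σ.trace = 1) (hτtr : τ.trace = 1) :
    Real.sqrt (1 - ((ρ * σ).trace).re) ≤
      Real.sqrt (1 - ((ρ * τ).trace).re) + Real.sqrt (1 - ((τ * σ).trace).re) := by
  rw [hρ.1.trace_mul_eq_inner_toLp_vec, hρ.1.trace_mul_eq_inner_toLp_vec,
    hτ.1.trace_mul_eq_inner_toLp_vec]
  exact sqrt_one_sub_re_inner_le_add (𝕜 := ℂ) (hρ.norm_toLp_vec_le_one hρtr)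
    (hσ.norm_toLp_vec_le_one hσtr) (hτ.norm_toLp_vec_le_one hτtr)
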